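/- (Invertibility of the explicit score-driven (ESD) filter, Theorem 1.) Let P ∈ ℝ^{k×k} be symmetric positive definite, α ≤ β with 0 < β < ∞ and λ_min(P) > α⁻, ω ∈ ℝ^k, Φ ∈ ℝ^{k×k}, and set γ := λ_min(P − ΦᵀPΦ). For each t ≥ 1 let ℓ_t : ℝ^k → ℝ be twice continuously differentiable with α·I ⪯ −∇²ℓ_t(θ) ⪯ β·I for all θ ∈ ℝ^k. Suppose two sequences (θ_{t|t})_{t≥0} and (θ̃_{t|t})_{t≥0} in ℝ^k satisfy, for every t ≥ 1, the prediction step θ_{t|t−1} = (I − Φ)ω + Φ θ_{t−1|t−1} and the explicit update θ_{t|t} = θ_{t|t−1} + P⁻¹∇ℓ_t(θ_{t|t−1}), and likewise for (θ̃_{t|t}) with the same functions ℓ_t but a possibly different starting point θ̃_{0|0}. Then for all t ≥ 0, ‖θ_{t|t} − θ̃_{t|t}‖²_P ≤ τ_ex^t · ‖θ_{0|0} − θ̃_{0|0}‖²_P, where τ_ex := (1 − γ⁺/λ_max(P) + γ⁻/λ_min(P)) · (1 − min{ α⁺/λ_max(P) − α⁻/λ_min(P) , (2λ_min(P) − β)/λ_min(P)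 })². In particular, if τ_ex < 1 then ‖θ_{t|t} − θ̃_{t|t}‖ → 0 as t → ∞ (exponentially fast) for any starting points. -/

import Mathlib

/-!
The difference `d` of two filtered paths is propagated by the prediction step `d ↦ Φ d`
followed by the update step. Since `‖Φ d‖²_P = ‖d‖²_P - dᵀ (P - ΦᵀPΦ) d`, the prediction step
multiplies `‖d‖²_P` by at most `1 - γ⁺/λ_max(P) + γ⁻/λ_min(P)`. By the mean value theorem the
update step acts on `d` as `I + P⁻¹A = P⁻¹(P + A)`, where `A` is the average Hessian along the
segment, so `-β ⪯ A ⪯ -α`. Comparing `‖·‖²` with `‖·‖²_P` through `λ_min(P)` and `λ_max(P)` gives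
`-ρ P ⪯ P + A ⪯ ρ P` for `ρ = 1 - min {α⁺/λ_max(P) - α⁻/λ_min(P), (2λ_min(P) - β)/λ_min(P)}`,
and after conjugation by `P^{-1/2}` this bounds the update by `ρ` in the `P`-norm. Iterating
`‖d_{t+1}‖²_P ≤ τ_ex ‖d_t‖²_P` gives the claim.
-/

open Matrix

/-- Smallest eigenvalue of a (Hermitian) real matrix; junk value 0 otherwise. -/
noncomputable def lMin {k : ℕ} (A : Matrix (Fin k) (Fin k) ℝ) : ℝ :=
  letI := Classical.propDecidable A.IsHermitian
  if h : A.IsHermitian then ⨅ i, h.eigenvalues i else 0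

/-- Largest eigenvalue of a (Hermitian) real matrix; junk value 0 otherwise. -/
noncomputable def lMax {k : ℕ} (A : Matrix (Fin k) (Fin k) ℝ) : ℝ :=
  letI := Classical.propDecidable A.IsHermitian
  if h : A.IsHermitian then ⨆ i, h.eigenvalues i else 0

/-- P-weighted squared vector norm `‖x‖_P² = xᵀ P x`. -/
def wq {k : ℕ} (P : Matrix (Fin k) (Fin k) ℝ) (x : Fin k → ℝ) : ℝ := x ⬝ᵥ P *ᵥ x

/-- Induced P-weighted matrix norm `‖A‖_P = sup_{x ≠ 0} ‖Ax‖_P / ‖x‖_P`. -/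
noncomputable def wMatNorm {k : ℕ} (P A : Matrix (Fin k) (Fin k) ℝ) : ℝ :=
  sSup {r : ℝ | ∃ x : Fin k → ℝ, x ≠ 0 ∧ r = Real.sqrt (wq P (A *ᵥ x)) / Real.sqrt (wq P x)}

open Filter

open scoped MatrixOrder

section QuadraticForms

variable {n : Type*} [Fintype n]

lemma Matrix.posSemidef_smul_one_sub_iff [DecidableEq n] {A : Matrix n n ℝ} (hA : A.IsHermitian)
    {r : ℝ} : (r • 1 - A).PosSemidef ↔ ∀ x, x ⬝ᵥ A *ᵥ x ≤ r * (x ⬝ᵥ x) := by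
  have hquad : ∀ x, x ⬝ᵥ (r • 1 - A) *ᵥ x = r * (x ⬝ᵥ x) - x ⬝ᵥ A *ᵥ x := by
    simp [sub_mulVec, dotProduct_sub, smul_mulVec]
  refine ⟨fun h x => ?_, fun h => .of_dotProduct_mulVec_nonneg ?_ fun x => ?_⟩
  · simpa [hquad] using h.dotProduct_mulVec_nonneg x
  · exact (isHermitian_one.smul (.all r)).sub hA
  · simpa [hquad] using h x

lemma Matrix.posSemidef_sub_smul_one_iff [DecidableEq n] {A : Matrix n n ℝ} (hA : A.IsHermitian)
    {r : ℝ} : (A - r • 1).PosSemidef ↔ ∀ x, r * (x ⬝ᵥ x) ≤ x ⬝ᵥ A *ᵥ x := by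
  rw [show A - r • 1 = (-r) • 1 - -A by rw [neg_smul]; abel, posSemidef_smul_one_sub_iff hA.neg]
  simp [neg_mulVec]

lemma Matrix.IsHermitian.mulVec_dotProduct_mulVec_mulVec {R : Matrix n n ℝ} (hR : R.IsHermitian)
    (M : Matrix n n ℝ) (u v : n → ℝ) : (R *ᵥ u) ⬝ᵥ M *ᵥ (R *ᵥ v) = u ⬝ᵥ (R * M * R) *ᵥ v := by
  rw [← mulVec_mulVec, ← mulVec_mulVec, dotProduct_mulVec u R, ← mulVec_transpose,
    ← conjTranspose_eq_transpose_of_trivial, hR.eq]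

lemma Matrix.IsHermitian.mulVec_dotProduct_mulVec_le [DecidableEq n] {A : Matrix n n ℝ}
    (hA : A.IsHermitian) {ρ : ℝ} (hlow : ∀ x, -ρ * (x ⬝ᵥ x) ≤ x ⬝ᵥ A *ᵥ x)
    (hup : ∀ x, x ⬝ᵥ A *ᵥ x ≤ ρ * (x ⬝ᵥ x)) (x : n → ℝ) :
    (A *ᵥ x) ⬝ᵥ (A *ᵥ x) ≤ ρ ^ 2 * (x ⬝ᵥ x) := by
  have hlow' : algebraMap ℝ (Matrix n n ℝ) (-ρ) ≤ A := by
    rw [le_iff, Algebra.algebraMap_eq_smul_one]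
    exact (posSemidef_sub_smul_one_iff hA).mpr hlow
  have hup' : A ≤ algebraMap ℝ (Matrix n n ℝ) ρ := by
    rw [le_iff, Algebra.algebraMap_eq_smul_one]
    exact (posSemidef_smul_one_sub_iff hA).mpr hup
  have hspec : ∀ s ∈ spectrum ℝ A, s ^ 2 ≤ ρ ^ 2 := fun s hs =>
    sq_le_sq' ((_root_.algebraMap_le_iff_le_spectrum hA.isSelfAdjoint).mp hlow' s hs)
      ((_root_.le_algebraMap_iff_spectrum_le hA.isSelfAdjoint).mp hup' s hs)
  have hsq : A ^ 2 ≤ algebraMap ℝ (Matrix n n ℝ) (ρ ^ 2) := by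
    rw [← cfc_pow_id (R := ℝ) A 2]
    exact cfc_le_algebraMap _ _ A hspec
  rw [le_iff, Algebra.algebraMap_eq_smul_one, posSemidef_smul_one_sub_iff (hA.pow 2)] at hsq
  have hAA : (A *ᵥ x) ⬝ᵥ (A *ᵥ x) = x ⬝ᵥ (A ^ 2) *ᵥ x := by
    simpa [sq] using hA.mulVec_dotProduct_mulVec_mulVec 1 x x
  exact hAA ▸ hsq x

lemma norm_le_sqrt_dotProduct_self (x : n → ℝ) : ‖x‖ ≤ √(x ⬝ᵥ x) := by
  refine (pi_norm_le_iff_of_nonneg (Real.sqrt_nonneg _)).mpr fun i => ?_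
  rw [Real.norm_eq_abs]
  refine Real.abs_le_sqrt ?_
  rw [sq]
  exact Finset.single_le_sum (f := fun j => x j * x j) (fun j _ => mul_self_nonneg (x j))
    (Finset.mem_univ i)

end QuadraticForms

section Eigenvalues

variable {k : ℕ} {A : Matrix (Fin k) (Fin k) ℝ}

lemma pos_of_lMin_ne_zero (h : lMin A ≠ 0) : 0 < k := by
  refine Nat.pos_of_ne_zero fun hk => h ?_
  subst hk
  by_cases hA : A.IsHermitian <;> simp [lMin]

lemma lMin_mul_dotProduct_self_le (hA : A.IsHermitian) (x : Fin k → ℝ) :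
    lMin A * (x ⬝ᵥ x) ≤ x ⬝ᵥ A *ᵥ x := by
  refine (posSemidef_sub_smul_one_iff hA).mp ?_ x
  rw [← Algebra.algebraMap_eq_smul_one, ← le_iff]
  refine algebraMap_le_of_le_spectrum ?_
  rw [hA.spectrum_real_eq_range_eigenvalues]
  rintro _ ⟨i, rfl⟩
  rw [lMin, dif_pos hA]
  exact ciInf_le (Finite.bddBelow_range _) i

lemma dotProduct_mulVec_le_lMax_mul (hA : A.IsHermitian) (x : Fin k → ℝ) :
    x ⬝ᵥ A *ᵥ x ≤ lMax A * (x ⬝ᵥ x) := by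
  refine (posSemidef_smul_one_sub_iff hA).mp ?_ x
  rw [← Algebra.algebraMap_eq_smul_one, ← le_iff]
  refine le_algebraMap_of_spectrum_le ?_
  rw [hA.spectrum_real_eq_range_eigenvalues]
  rintro _ ⟨i, rfl⟩
  rw [lMax, dif_pos hA]
  exact le_ciSup (Finite.bddAbove_range _) i

lemma lMax_pos_of_lMin_pos (hA : A.IsHermitian) (h : 0 < lMin A) : 0 < lMax A := by
  have : NeZero k := ⟨(pos_of_lMin_ne_zero h.ne').ne'⟩
  rw [lMin, dif_pos hA] at h
  rw [lMax, dif_pos hA]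
  exact h.trans_le (ciInf_le_ciSup (Finite.bddBelow_range _) (Finite.bddAbove_range _))

end Eigenvalues

section SegmentAverage
variable {n : Type*}

noncomputable def segmentAverage (H : (n → ℝ) → Matrix n n ℝ) (x y : n → ℝ) : Matrix n n ℝ :=
  Matrix.of fun i j => ∫ s in (0 : ℝ)..1, H (y + s • (x - y)) i j

variable {H : (n → ℝ) → Matrix n n ℝ} {x y : n → ℝ}

lemma isHermitian_segmentAverage (hH : ∀ z, (H z).IsHermitian) :
    (segmentAverage H x y).IsHermitian :=
  IsHermitian.ext fun i j => by simp [segmentAverage, ← (hH _).apply j i]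

variable [Fintype n]

lemma segmentAverage_mulVec_apply (hH : Continuous H) (v : n → ℝ) (i : n) :
    (segmentAverage H x y *ᵥ v) i = ∫ s in (0 : ℝ)..1, (H (y + s • (x - y)) *ᵥ v) i := by
  simp only [segmentAverage, mulVec, dotProduct, of_apply]
  rw [intervalIntegral.integral_finsetSum fun j _ =>
    (by fun_prop : Continuous _).intervalIntegrable _ _]
  simp only [intervalIntegral.integral_mul_const]

lemma dotProduct_segmentAverage_mulVec (hH : Continuous H) (v : n → ℝ) :
    v ⬝ᵥ segmentAverage H x y *ᵥ v = ∫ s in (0 : ℝ)..1, v ⬝ᵥ H (y + s • (x - y)) *ᵥ v := by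
  simp only [dotProduct, segmentAverage_mulVec_apply hH]
  rw [intervalIntegral.integral_finsetSum fun j _ =>
    (by fun_prop : Continuous _).intervalIntegrable _ _]
  simp only [intervalIntegral.integral_const_mul]

lemma segmentAverage_mulVec_sub {G : (n → ℝ) → n → ℝ}
    (hG : ∀ z, HasFDerivAt G (H z).mulVecLin.toContinuousLinearMap z) (hH : Continuous H) :
    segmentAverage H x y *ᵥ (x - y) = G x - G y := by
  funext i
  have hderiv : ∀ s : ℝ, HasDerivAt (fun s : ℝ => G (y + s • (x - y)) i)
      ((H (y + s • (x - y)) *ᵥ (x - y)) i) s := fun s => by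
    have hline : HasDerivAt (fun s : ℝ => y + s • (x - y)) (x - y) s := by
      simpa using ((hasDerivAt_id s).smul_const (x - y)).const_add y
    exact hasDerivAt_pi.mp ((hG _).comp_hasDerivAt s hline) i
  rw [segmentAverage_mulVec_apply hH, intervalIntegral.integral_eq_sub_of_hasDerivAt
    (fun s _ => hderiv s) ((by fun_prop : Continuous _).intervalIntegrable _ _)]
  simp

lemma le_dotProduct_segmentAverage_mulVec (hH : Continuous H) {v : n → ℝ} {r : ℝ}
    (h : ∀ z, r ≤ v ⬝ᵥ H z *ᵥ v) : r ≤ v ⬝ᵥ segmentAverage H x y *ᵥ v := by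
  rw [dotProduct_segmentAverage_mulVec hH]
  simpa using intervalIntegral.integral_mono_on zero_le_one
    (intervalIntegrable_const (μ := MeasureTheory.volume))
    ((by fun_prop : Continuous _).intervalIntegrable _ _) (fun s _ => h (y + s • (x - y)))

lemma dotProduct_segmentAverage_mulVec_le (hH : Continuous H) {v : n → ℝ} {r : ℝ}
    (h : ∀ z, v ⬝ᵥ H z *ᵥ v ≤ r) : v ⬝ᵥ segmentAverage H x y *ᵥ v ≤ r := by
  rw [dotProduct_segmentAverage_mulVec hH]
  simpa using intervalIntegral.integral_mono_on zero_le_one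
    ((by fun_prop : Continuous _).intervalIntegrable _ _)
    (intervalIntegrable_const (μ := MeasureTheory.volume)) (fun s _ => h (y + s • (x - y)))

end SegmentAverage

lemma max_div_sub_max_neg_div_mul_le {a c C n q : ℝ} (hc : 0 < c) (hC : 0 < C)
    (hlo : c * n ≤ q) (hhi : q ≤ C * n) : (max a 0 / C - max (-a) 0 / c) * q ≤ a * n := by
  have hpos : max a 0 / C * q ≤ max a 0 * n := by
    rw [div_mul_eq_mul_div, div_le_iff₀ hC]
    nlinarith [le_max_right a 0]
  have hneg : max (-a) 0 * n ≤ max (-a) 0 / c * q := by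
    rw [div_mul_eq_mul_div, le_div_iff₀ hc]
    nlinarith [le_max_right (-a) 0]
  have ha : a * n = max a 0 * n - max (-a) 0 * n := by
    rcases le_total a 0 with h | h <;> simp [h]
  rw [sub_mul, ha]
  linarith

section Contraction

variable {k : ℕ} {P : Matrix (Fin k) (Fin k) ℝ}

lemma wq_nonneg (hP : P.PosSemidef) (x : Fin k → ℝ) : 0 ≤ wq P x := by
  simpa [wq] using hP.dotProduct_mulVec_nonneg x

noncomputable def predictionRate (P Φ : Matrix (Fin k) (Fin k) ℝ) : ℝ :=
  1 - max (lMin (P - Φᵀ * P * Φ)) 0 / lMax P + max (-lMin (P - Φᵀ * P * Φ)) 0 / lMin P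

noncomputable def updateRate (P : Matrix (Fin k) (Fin k) ℝ) (α β : ℝ) : ℝ :=
  1 - min (max α 0 / lMax P - max (-α) 0 / lMin P) ((2 * lMin P - β) / lMin P)

lemma wq_mulVec_le_predictionRate_mul (hP : P.PosDef) (hc : 0 < lMin P)
    (Φ : Matrix (Fin k) (Fin k) ℝ) (d : Fin k → ℝ) :
    wq P (Φ *ᵥ d) ≤ predictionRate P Φ * wq P d := by
  set γ := lMin (P - Φᵀ * P * Φ)
  have hS : (P - Φᵀ * P * Φ).IsHermitian :=
    hP.isHermitian.sub (by simpa using isHermitian_conjTranspose_mul_mul Φ hP.isHermitian)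
  have hSd : d ⬝ᵥ (P - Φᵀ * P * Φ) *ᵥ d = wq P d - wq P (Φ *ᵥ d) := by
    rw [sub_mulVec, dotProduct_sub, ← mulVec_mulVec, ← mulVec_mulVec, dotProduct_mulVec d Φᵀ,
      vecMul_transpose]
    rfl
  have hγ : (max γ 0 / lMax P - max (-γ) 0 / lMin P) * wq P d ≤ γ * (d ⬝ᵥ d) :=
    max_div_sub_max_neg_div_mul_le hc (lMax_pos_of_lMin_pos hP.isHermitian hc)
      (lMin_mul_dotProduct_self_le hP.isHermitian d)
      (dotProduct_mulVec_le_lMax_mul hP.isHermitian d)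
  have hrate : predictionRate P Φ * wq P d
      = wq P d - (max γ 0 / lMax P - max (-γ) 0 / lMin P) * wq P d := by
    unfold predictionRate; ring
  linarith [lMin_mul_dotProduct_self_le hS d]

lemma predictionRate_nonneg (hP : P.PosDef) (hc : 0 < lMin P) (Φ : Matrix (Fin k) (Fin k) ℝ) :
    0 ≤ predictionRate P Φ := by
  have : NeZero k := ⟨(pos_of_lMin_ne_zero hc.ne').ne'⟩
  obtain ⟨d, hd⟩ := exists_ne (0 : Fin k → ℝ)
  have hpos : 0 < wq P d := by simpa [wq] using hP.dotProduct_mulVec_pos hd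
  have := (wq_nonneg hP.posSemidef (Φ *ᵥ d)).trans (wq_mulVec_le_predictionRate_mul hP hc Φ d)
  exact nonneg_of_mul_nonneg_left this hpos

-- Conjugate by `Q⁻¹ = P^{-1/2}` to reduce to `Matrix.IsHermitian.mulVec_dotProduct_mulVec_le`.
lemma wq_inv_mulVec_mulVec_le (hP : P.PosDef) {B : Matrix (Fin k) (Fin k) ℝ}
    (hB : B.IsHermitian) {ρ : ℝ} (hlow : ∀ x, -ρ * wq P x ≤ x ⬝ᵥ B *ᵥ x)
    (hup : ∀ x, x ⬝ᵥ B *ᵥ x ≤ ρ * wq P x) (x : Fin k → ℝ) :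
    wq P (P⁻¹ *ᵥ B *ᵥ x) ≤ ρ ^ 2 * wq P x := by
  set Q := CFC.sqrt P
  have hQ : Q.IsHermitian := (CFC.sqrt_nonneg P).posSemidef.isHermitian
  have hQQ : Q * Q = P := CFC.sqrt_mul_sqrt_self P hP.posSemidef.nonneg
  have hQunit : IsUnit Q.det := (isUnit_iff_isUnit_det Q).mp <|
    CFC.isUnit_sqrt_iff_isStrictlyPositive.mpr (isStrictlyPositive_iff_posDef.mpr hP)
  set R := Q⁻¹
  have hR : R.IsHermitian := hQ.inv
  have hRQ : R * Q = 1 := nonsing_inv_mul _ hQunit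
  have hQR : Q * R = 1 := mul_nonsing_inv _ hQunit
  have hRPR : R * P * R = 1 := by rw [← hQQ, ← Matrix.mul_assoc, hRQ, Matrix.one_mul, hQR]
  have hRR : R * R = P⁻¹ := by rw [← hQQ, Matrix.mul_inv_rev]
  have hT : (R * B * R).IsHermitian := by
    simpa only [hR.eq] using isHermitian_conjTranspose_mul_mul R hB
  have hwq : ∀ y, wq P (R *ᵥ y) = y ⬝ᵥ y := fun y => by
    rw [wq, hR.mulVec_dotProduct_mulVec_mulVec, hRPR, one_mulVec]
  have key := hT.mulVec_dotProduct_mulVec_le (ρ := ρ)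
    (fun y => by simpa only [hwq, hR.mulVec_dotProduct_mulVec_mulVec] using hlow (R *ᵥ y))
    (fun y => by simpa only [hwq, hR.mulVec_dotProduct_mulVec_mulVec] using hup (R *ᵥ y))
    (Q *ᵥ x)
  have hTQ : (R * B * R) *ᵥ (Q *ᵥ x) = R *ᵥ B *ᵥ x := by
    rw [mulVec_mulVec, Matrix.mul_assoc, hRQ, Matrix.mul_one, ← mulVec_mulVec]
  have hx : x = R *ᵥ Q *ᵥ x := by rw [mulVec_mulVec, hRQ, one_mulVec]
  rwa [hTQ, ← hwq, ← hwq, mulVec_mulVec, hRR, ← hx] at key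

lemma wq_add_inv_mulVec_mulVec_le (hP : P.PosDef) (hc : 0 < lMin P)
    {A : Matrix (Fin k) (Fin k) ℝ} (hA : A.IsHermitian) {α β : ℝ} (hβ : 0 ≤ β)
    (hαA : ∀ v, α * (v ⬝ᵥ v) ≤ -(v ⬝ᵥ A *ᵥ v)) (hAβ : ∀ v, -(v ⬝ᵥ A *ᵥ v) ≤ β * (v ⬝ᵥ v))
    (d : Fin k → ℝ) : wq P (d + P⁻¹ *ᵥ A *ᵥ d) ≤ updateRate P α β ^ 2 * wq P d := by
  have hfactor : d + P⁻¹ *ᵥ A *ᵥ d = P⁻¹ *ᵥ (P + A) *ᵥ d := by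
    rw [add_mulVec, mulVec_add, mulVec_mulVec d P⁻¹ P,
      nonsing_inv_mul _ ((isUnit_iff_isUnit_det P).mp hP.isUnit), one_mulVec]
  rw [hfactor]
  refine wq_inv_mulVec_mulVec_le hP (hP.isHermitian.add hA) (fun x => ?_) (fun x => ?_) d
  all_goals
    have hcx := lMin_mul_dotProduct_self_le hP.isHermitian x
    have hwq := wq_nonneg hP.posSemidef x
    unfold wq at hwq ⊢
    rw [add_mulVec, dotProduct_add]
  · have hρ : -updateRate P α β ≤ 1 - β / lMin P := by
      have hsplit : (2 * lMin P - β) / lMin P = 2 - β / lMin P := by field_simp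
      have := min_le_right (max α 0 / lMax P - max (-α) 0 / lMin P) ((2 * lMin P - β) / lMin P)
      unfold updateRate
      linarith
    have hβx : β * (x ⬝ᵥ x) ≤ β / lMin P * (x ⬝ᵥ P *ᵥ x) := by
      rw [div_mul_eq_mul_div, le_div_iff₀ hc]
      nlinarith
    linarith [mul_le_mul_of_nonneg_right hρ hwq, hAβ x]
  · have hρ : 1 - (max α 0 / lMax P - max (-α) 0 / lMin P) ≤ updateRate P α β := by
      have := min_le_left (max α 0 / lMax P - max (-α) 0 / lMin P) ((2 * lMin P - β) / lMin P)
      unfold updateRate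
      linarith
    have hαx := max_div_sub_max_neg_div_mul_le (a := α) hc
      (lMax_pos_of_lMin_pos hP.isHermitian hc) hcx (dotProduct_mulVec_le_lMax_mul hP.isHermitian x)
    linarith [mul_le_mul_of_nonneg_right hρ hwq, hαA x]

noncomputable def scoreUpdate (P : Matrix (Fin k) (Fin k) ℝ) (g : (Fin k → ℝ) → Fin k → ℝ)
    (θ : Fin k → ℝ) : Fin k → ℝ :=
  θ + P⁻¹ *ᵥ g θ

lemma wq_scoreUpdate_sub_le (hP : P.PosDef) (hc : 0 < lMin P) {g : (Fin k → ℝ) → Fin k → ℝ}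
    {H : (Fin k → ℝ) → Matrix (Fin k) (Fin k) ℝ}
    (hg : ∀ z, HasFDerivAt g (H z).mulVecLin.toContinuousLinearMap z) (hH : Continuous H)
    (hHsymm : ∀ z, (H z).IsHermitian) {α β : ℝ} (hβ : 0 ≤ β)
    (hα : ∀ z, (-(H z) - α • (1 : Matrix (Fin k) (Fin k) ℝ)).PosSemidef)
    (hβH : ∀ z, (β • (1 : Matrix (Fin k) (Fin k) ℝ) - -(H z)).PosSemidef) (x y : Fin k → ℝ) :
    wq P (scoreUpdate P g x - scoreUpdate P g y) ≤ updateRate P α β ^ 2 * wq P (x - y) := by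
  have hdiff : scoreUpdate P g x - scoreUpdate P g y
      = (x - y) + P⁻¹ *ᵥ segmentAverage H x y *ᵥ (x - y) := by
    rw [scoreUpdate, scoreUpdate, segmentAverage_mulVec_sub hg hH, mulVec_sub]
    abel
  rw [hdiff]
  refine wq_add_inv_mulVec_mulVec_le hP hc (isHermitian_segmentAverage hHsymm) hβ
    (fun v => ?_) (fun v => ?_) _
  · have hαv : ∀ z, v ⬝ᵥ H z *ᵥ v ≤ -(α * (v ⬝ᵥ v)) := fun z => by
      have := (posSemidef_sub_smul_one_iff (hHsymm z).neg).mp (hα z) v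
      rw [neg_mulVec, dotProduct_neg] at this
      linarith
    linarith [dotProduct_segmentAverage_mulVec_le (x := x) (y := y) hH hαv]
  · have hβv : ∀ z, -(β * (v ⬝ᵥ v)) ≤ v ⬝ᵥ H z *ᵥ v := fun z => by
      have := (posSemidef_smul_one_sub_iff (hHsymm z).neg).mp (hβH z) v
      rw [neg_mulVec, dotProduct_neg] at this
      linarith
    linarith [le_dotProduct_segmentAverage_mulVec (x := x) (y := y) hH hβv]

end Contraction

lemma le_pow_mul_of_le_mul {u : ℕ → ℝ} {τ : ℝ} (hτ : 0 ≤ τ) (h : ∀ t, u (t + 1) ≤ τ * u t)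
    (t : ℕ) : u t ≤ τ ^ t * u 0 := by
  induction t with
  | zero => simp
  | succ t ih =>
    calc u (t + 1) ≤ τ * u t := h t
      _ ≤ τ * (τ ^ t * u 0) := by gcongr
      _ = τ ^ (t + 1) * u 0 := by ring

lemma tendsto_norm_of_wq_le_pow_mul {k : ℕ} {P : Matrix (Fin k) (Fin k) ℝ} (hP : P.IsHermitian)
    (hc : 0 < lMin P) {τ w₀ : ℝ} (hτ₀ : 0 ≤ τ) (hτ₁ : τ < 1) {x : ℕ → Fin k → ℝ}
    (h : ∀ t, wq P (x t) ≤ τ ^ t * w₀) : Tendsto (fun t => ‖x t‖) atTop (nhds 0) := by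
  have hbound : ∀ t, ‖x t‖ ≤ √(τ ^ t * w₀ / lMin P) := fun t =>
    (norm_le_sqrt_dotProduct_self (x t)).trans <| Real.sqrt_le_sqrt <| by
      rw [le_div_iff₀ hc, mul_comm]
      exact (lMin_mul_dotProduct_self_le hP (x t)).trans (h t)
  have hlim : Tendsto (fun t : ℕ => √(τ ^ t * w₀ / lMin P)) atTop (nhds 0) := by
    simpa using (((tendsto_pow_atTop_nhds_zero_of_lt_one hτ₀ hτ₁).mul_const w₀).div_const
      (lMin P)).sqrt
  exact squeeze_zero (fun t => norm_nonneg _) hbound hlim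

theorem esd_filter_invertibility_general {k : ℕ}
    (P Φ : Matrix (Fin k) (Fin k) ℝ) (hP : P.PosDef) (ω : Fin k → ℝ)
    (α β : ℝ) (hβ : 0 < β) (hpen : max (-α) 0 < lMin P)
    (G : ℕ → (Fin k → ℝ) → (Fin k → ℝ))
    (Hs : ℕ → (Fin k → ℝ) → Matrix (Fin k) (Fin k) ℝ)
    (hhess : ∀ t θv, HasFDerivAt (G t)
      (LinearMap.toContinuousLinearMap (Hs t θv).mulVecLin) θv)
    (hHscont : ∀ t, Continuous (Hs t))
    (hHssymm : ∀ t θv, (Hs t θv).IsHermitian)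
    (hcurvlow : ∀ t θv, (-(Hs t θv) - α • (1 : Matrix (Fin k) (Fin k) ℝ)).PosSemidef)
    (hcurvup : ∀ t θv, (β • (1 : Matrix (Fin k) (Fin k) ℝ) - -(Hs t θv)).PosSemidef)
    (θ θ' : ℕ → (Fin k → ℝ))
    (hrec : ∀ t : ℕ,
      θ (t + 1) = ((1 - Φ) *ᵥ ω + Φ *ᵥ θ t)
        + P⁻¹ *ᵥ G (t + 1) ((1 - Φ) *ᵥ ω + Φ *ᵥ θ t))
    (hrec' : ∀ t : ℕ,
      θ' (t + 1) = ((1 - Φ) *ᵥ ω + Φ *ᵥ θ' t)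
        + P⁻¹ *ᵥ G (t + 1) ((1 - Φ) *ᵥ ω + Φ *ᵥ θ' t))
    (τ : ℝ)
    (hτ : τ =
      (1 - max (lMin (P - Φᵀ * P * Φ)) 0 / lMax P
         + max (-lMin (P - Φᵀ * P * Φ)) 0 / lMin P)
      * (1 - min (max α 0 / lMax P - max (-α) 0 / lMin P)
               ((2 * lMin P - β) / lMin P)) ^ 2) :
    (∀ t : ℕ, wq P (θ t - θ' t) ≤ τ ^ t * wq P (θ 0 - θ' 0)) ∧
      (τ < 1 → Tendsto (fun t => ‖θ t - θ' t‖) atTop (nhds 0)) := by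
  have hc : 0 < lMin P := (le_max_right _ _).trans_lt hpen
  replace hτ : τ = predictionRate P Φ * updateRate P α β ^ 2 := hτ
  have hτ₀ : 0 ≤ τ := hτ ▸ mul_nonneg (predictionRate_nonneg hP hc Φ) (sq_nonneg _)
  have hstep : ∀ t, wq P (θ (t + 1) - θ' (t + 1)) ≤ τ * wq P (θ t - θ' t) := by
    intro t
    have hpredict : ((1 - Φ) *ᵥ ω + Φ *ᵥ θ t) - ((1 - Φ) *ᵥ ω + Φ *ᵥ θ' t)
        = Φ *ᵥ (θ t - θ' t) := by
      rw [mulVec_sub]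
      abel
    calc wq P (θ (t + 1) - θ' (t + 1))
        ≤ updateRate P α β ^ 2 * wq P (Φ *ᵥ (θ t - θ' t)) := by
          rw [hrec, hrec', ← hpredict]
          exact wq_scoreUpdate_sub_le hP hc (hhess _) (hHscont _) (hHssymm _) hβ.le
            (hcurvlow _) (hcurvup _) _ _
      _ ≤ updateRate P α β ^ 2 * (predictionRate P Φ * wq P (θ t - θ' t)) := by
          gcongr
          exact wq_mulVec_le_predictionRate_mul hP hc Φ _
      _ = τ * wq P (θ t - θ' t) := by rw [hτ]; ring
  have hbound := le_pow_mul_of_le_mul (u := fun t => wq P (θ t - θ' t)) hτ₀ hstep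
  exact ⟨hbound, fun hτ₁ => tendsto_norm_of_wq_le_pow_mul hP.isHermitian hc hτ₀ hτ₁ hbound⟩

/-- Theorem 1 (Invertibility of the explicit score-driven filter).
`ℓ t` is the postulated log density at time `t` (data absorbed), `G t = ∇ℓ t` its gradient and
`Hs t = ∇²ℓ t` its (continuous, symmetric) Hessian satisfying `α·I ⪯ −∇²ℓ_t(θ) ⪯ β·I`
everywhere, with `α ≤ β`, `0 < β` and `λ_min(P) > α⁻`.  Any two filtered paths driven by the
prediction step `θ_{t|t−1} = (I − Φ)ω + Φθ_{t−1|t−1}` and the explicit update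
`θ_{t|t} = θ_{t|t−1} + P⁻¹∇ℓ_t(θ_{t|t−1})` satisfy
`‖θ_{t|t} − θ̃_{t|t}‖²_P ≤ τ_ex^t ‖θ_{0|0} − θ̃_{0|0}‖²_P`; if `τ_ex < 1` they converge to each
other exponentially fast. -/
theorem esd_filter_invertibility {k : ℕ}
    (P Φ : Matrix (Fin k) (Fin k) ℝ) (hP : P.PosDef) (ω : Fin k → ℝ)
    (α β : ℝ) (hαβ : α ≤ β) (hβ : 0 < β) (hpen : max (-α) 0 < lMin P)
    (ℓ : ℕ → (Fin k → ℝ) → ℝ)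
    (G : ℕ → (Fin k → ℝ) → (Fin k → ℝ))
    (Hs : ℕ → (Fin k → ℝ) → Matrix (Fin k) (Fin k) ℝ)
    (hgrad : ∀ t θv, HasFDerivAt (ℓ t)
      (∑ i, G t θv i • (ContinuousLinearMap.proj i : (Fin k → ℝ) →L[ℝ] ℝ)) θv)
    (hhess : ∀ t θv, HasFDerivAt (G t)
      (LinearMap.toContinuousLinearMap (Hs t θv).mulVecLin) θv)
    (hHscont : ∀ t, Continuous (Hs t))
    (hHssymm : ∀ t θv, (Hs t θv).IsHermitian)
    (hcurvlow : ∀ t θv, (-(Hs t θv) - α • (1 : Matrix (Fin k) (Fin k) ℝ)).PosSemidef)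
    (hcurvup : ∀ t θv, (β • (1 : Matrix (Fin k) (Fin k) ℝ) - -(Hs t θv)).PosSemidef)
    (θ θ' : ℕ → (Fin k → ℝ))
    (hrec : ∀ t : ℕ,
      θ (t + 1) = ((1 - Φ) *ᵥ ω + Φ *ᵥ θ t)
        + P⁻¹ *ᵥ G (t + 1) ((1 - Φ) *ᵥ ω + Φ *ᵥ θ t))
    (hrec' : ∀ t : ℕ,
      θ' (t + 1) = ((1 - Φ) *ᵥ ω + Φ *ᵥ θ' t)
        + P⁻¹ *ᵥ G (t + 1) ((1 - Φ) *ᵥ ω + Φ *ᵥ θ' t))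
    (τ : ℝ)
    (hτ : τ =
      (1 - max (lMin (P - Φᵀ * P * Φ)) 0 / lMax P
         + max (-lMin (P - Φᵀ * P * Φ)) 0 / lMin P)
      * (1 - min (max α 0 / lMax P - max (-α) 0 / lMin P)
               ((2 * lMin P - β) / lMin P)) ^ 2) :
    (∀ t : ℕ, wq P (θ t - θ' t) ≤ τ ^ t * wq P (θ 0 - θ' 0)) ∧
      (τ < 1 → Tendsto (fun t => ‖θ t - θ' t‖) atTop (nhds 0)) :=
  esd_filter_invertibility_general P Φ hP ω α β hβ hpen G Hs hhess hHscont hHssymm hcurvlow hcurvup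
    θ θ' hrec hrec' τ hτ
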